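/- For real y, b, and u > d > 0, the convolution integral (1/D)·(1/√(2π(u−d)))·∫₀^∞ x·exp(−(x²/(2D) + (b−x−y)²/(2(u−d)))) dx equals (1/(u−d+D))·{ (√(u−d)/√(2π))·exp(−(y−b)²/(2(u−d))) − (1/2)·((y−b)·√D/√(u−d+D))·exp(−(y−b)²/(2(u−d+D)))·Erfc((y−b)·√D/√(2(u−d)(u−d+D))) }, for any D > 0. -/

import Mathlib

/-
Completing the square turns the integrand into `x` times a Gaussian with mean
`m = (b - y) D / (u - d + D)`. Writing `x = m + (x - m)`, the `m` part is a Gaussian tail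
integral, hence an `Erfc`, and the `x - m` part has an elementary antiderivative.
-/

open MeasureTheory

noncomputable def Erfc (x : ℝ) : ℝ :=
  (2 / Real.sqrt Real.pi) * ∫ t in Set.Ioi x, Real.exp (-t ^ 2)

open Set Filter Real Topology

theorem integral_Ioi_comp_sub_right {E : Type*} [NormedAddCommGroup E] [NormedSpace ℝ E]
    (f : ℝ → E) (a m : ℝ) : ∫ x in Ioi a, f (x - m) = ∫ x in Ioi (a - m), f x := by
  rw [← integral_indicator measurableSet_Ioi, ← integral_indicator measurableSet_Ioi,
    ← integral_sub_right_eq_self ((Ioi (a - m)).indicator f) m]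
  congr 1 with x
  simp only [indicator, mem_Ioi, sub_lt_sub_iff_right]

theorem integral_Ioi_exp_neg_mul_sq_sub {α : ℝ} (hα : 0 < α) (a m : ℝ) :
    ∫ x in Ioi a, exp (-α * (x - m) ^ 2) = √π / (2 * √α) * Erfc (√α * (a - m)) := by
  have hscale := integral_comp_mul_left_Ioi (fun t => exp (-t ^ 2)) (a - m) (sqrt_pos.2 hα)
  simp only [mul_pow, sq_sqrt hα.le, smul_eq_mul] at hscale
  rw [integral_Ioi_comp_sub_right (fun t => exp (-α * t ^ 2)), Erfc]
  simp only [neg_mul, hscale]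
  field_simp

theorem integral_Ioi_sub_mul_exp_neg_mul_sq_sub {α : ℝ} (hα : 0 < α) (a m : ℝ) :
    ∫ x in Ioi a, (x - m) * exp (-α * (x - m) ^ 2) = exp (-α * (a - m) ^ 2) / (2 * α) := by
  rw [integral_Ioi_comp_sub_right (fun t => t * exp (-α * t ^ 2))]
  have hderiv : ∀ x ∈ Ioi (a - m),
      HasDerivAt (fun t => -exp (-α * t ^ 2) / (2 * α)) (x * exp (-α * x ^ 2)) x := by
    intro x _
    refine (((hasDerivAt_pow 2 x).const_mul (-α)).exp.fun_neg.div_const (2 * α)).congr_deriv ?_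
    field_simp
    ring
  have hlim : Tendsto (fun t => -exp (-α * t ^ 2) / (2 * α)) atTop (𝓝 0) := by
    have := ((tendsto_exp_atBot.comp ((tendsto_pow_atTop two_ne_zero).const_mul_atTop_of_neg
      (neg_neg_of_pos hα))).neg.div_const (2 * α))
    simpa using this
  rw [integral_Ioi_of_hasDerivAt_of_tendsto (by fun_prop) hderiv
    (integrable_mul_exp_neg_mul_sq hα).integrableOn hlim]
  ring

theorem integral_Ioi_mul_exp_neg_mul_sq_sub {α : ℝ} (hα : 0 < α) (a m : ℝ) :
    ∫ x in Ioi a, x * exp (-α * (x - m) ^ 2) =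
      m * (√π / (2 * √α)) * Erfc (√α * (a - m)) + exp (-α * (a - m) ^ 2) / (2 * α) := by
  have hI₀ : Integrable fun x => exp (-α * (x - m) ^ 2) :=
    (integrable_exp_neg_mul_sq hα).comp_sub_right m
  have hI₁ : Integrable fun x => (x - m) * exp (-α * (x - m) ^ 2) :=
    (integrable_mul_exp_neg_mul_sq hα).comp_sub_right m
  have hsplit : (fun x => x * exp (-α * (x - m) ^ 2)) =
      fun x => m * exp (-α * (x - m) ^ 2) + (x - m) * exp (-α * (x - m) ^ 2) := by
    funext x
    ring
  rw [hsplit, integral_add (hI₀.const_mul m).integrableOn hI₁.integrableOn, integral_const_mul,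
    integral_Ioi_exp_neg_mul_sq_sub hα, integral_Ioi_sub_mul_exp_neg_mul_sq_sub hα, mul_assoc]

section GaussianProduct

/- Up to a constant factor, `exp (-x²/(2D)) · exp (-(c - x)²/(2s))` is the Gaussian density
in `x` with mean `c D/(s + D)` and variance `D s/(s + D)`; these lemmas compute the constants. -/

variable {D s : ℝ}

theorem exp_neg_sq_div_add_sq_div (hD : 0 < D) (hs : 0 < s) (c x : ℝ) :
    exp (-(x ^ 2 / (2 * D) + (c - x) ^ 2 / (2 * s))) =
      exp (-c ^ 2 / (2 * (s + D))) *
        exp (-((s + D) / (2 * D * s)) * (x - c * D / (s + D)) ^ 2) := by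
  have : 0 < s + D := by positivity
  rw [← exp_add]
  congr 1
  field_simp
  ring

theorem exp_neg_sq_div_mul_exp_neg_sq_div (hD : 0 < D) (hs : 0 < s) (c : ℝ) :
    exp (-c ^ 2 / (2 * (s + D))) * exp (-((s + D) / (2 * D * s)) * (c * D / (s + D)) ^ 2) =
      exp (-c ^ 2 / (2 * s)) := by
  have : 0 < s + D := by positivity
  rw [← exp_add]
  congr 1
  field_simp
  ring

theorem sqrt_div_mul_mul_div (hD : 0 < D) (hs : 0 < s) (c : ℝ) :
    √((s + D) / (2 * D * s)) * (c * D / (s + D)) = c * √D / √(2 * s * (s + D)) := by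
  have hsqrt : √((s + D) / (2 * D * s)) * (D / (s + D)) = √D / √(2 * s * (s + D)) := by
    rw [← pow_left_inj₀ (by positivity) (by positivity) two_ne_zero]
    simp only [mul_pow, div_pow, sq_sqrt hD.le,
      sq_sqrt (by positivity : (0 : ℝ) ≤ (s + D) / (2 * D * s)),
      sq_sqrt (by positivity : (0 : ℝ) ≤ 2 * s * (s + D))]
    field_simp
  rw [mul_div_assoc, mul_div_assoc, ← hsqrt]
  ring

theorem one_div_mul_one_div_sqrt_mul_sqrt_pi_div (hD : 0 < D) (hs : 0 < s) (c : ℝ) :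
    1 / D * (1 / √(2 * π * s)) * (c * D / (s + D) * (√π / (2 * √((s + D) / (2 * D * s))))) =
      1 / (s + D) * (1 / 2) * (c * √D / √(s + D)) := by
  have hsqrt : √π / (√(2 * π * s) * √((s + D) / (2 * D * s))) = √D / √(s + D) := by
    rw [← sqrt_mul (by positivity), ← sqrt_div' _ (by positivity),
      ← sqrt_div' _ (by positivity)]
    congr 1
    field_simp
  rw [mul_div_assoc c √D, ← hsqrt]
  field_simp

theorem one_div_mul_one_div_sqrt_div_two_mul (hD : 0 < D) (hs : 0 < s) :
    1 / D * (1 / √(2 * π * s)) / (2 * ((s + D) / (2 * D * s))) =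
      1 / (s + D) * (√s / √(2 * π)) := by
  rw [sqrt_mul (by positivity)]
  field_simp
  exact (sq_sqrt hs.le).symm

end GaussianProduct

theorem h_b3_identity_general (y b : ℝ) (D d u : ℝ) (hD : 0 < D) (hu : d < u) :
    (1 / D) * (1 / Real.sqrt (2 * Real.pi * (u - d))) *
        ∫ x in Set.Ioi (0 : ℝ),
          x * Real.exp (-(x ^ 2 / (2 * D) + (b - x - y) ^ 2 / (2 * (u - d)))) =
      (1 / (u - d + D)) *
        ((Real.sqrt (u - d) / Real.sqrt (2 * Real.pi)) *
            Real.exp (-(y - b) ^ 2 / (2 * (u - d))) -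
          (1 / 2) * ((y - b) * Real.sqrt D / Real.sqrt (u - d + D)) *
            Real.exp (-(y - b) ^ 2 / (2 * (u - d + D))) *
            Erfc ((y - b) * Real.sqrt D / Real.sqrt (2 * (u - d) * (u - d + D)))) := by
  have hs : 0 < u - d := sub_pos.2 hu
  set s := u - d
  have hα : 0 < (s + D) / (2 * D * s) := by positivity
  simp only [sub_right_comm b _ y, exp_neg_sq_div_add_sq_div hD hs, mul_left_comm _ (exp _)]
  rw [integral_const_mul, integral_Ioi_mul_exp_neg_mul_sq_sub hα, zero_sub, neg_sq, mul_neg,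
    sqrt_div_mul_mul_div hD hs, ← neg_div, ← neg_mul, neg_sub, sub_sq_comm y b]
  linear_combination
    exp (-(b - y) ^ 2 / (2 * (s + D))) * Erfc ((y - b) * √D / √(2 * s * (s + D))) *
      one_div_mul_one_div_sqrt_mul_sqrt_pi_div hD hs (b - y) +
    1 / D * (1 / √(2 * π * s)) / (2 * ((s + D) / (2 * D * s))) *
      exp_neg_sq_div_mul_exp_neg_sq_div hD hs (b - y) +
    exp (-(b - y) ^ 2 / (2 * s)) * one_div_mul_one_div_sqrt_div_two_mul hD hs

theorem h_b3_identity (y b : ℝ) (D d u : ℝ) (hD : 0 < D) (hd : 0 < d) (hu : d < u) :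
    (1 / D) * (1 / Real.sqrt (2 * Real.pi * (u - d))) *
        ∫ x in Set.Ioi (0 : ℝ),
          x * Real.exp (-(x ^ 2 / (2 * D) + (b - x - y) ^ 2 / (2 * (u - d)))) =
      (1 / (u - d + D)) *
        ((Real.sqrt (u - d) / Real.sqrt (2 * Real.pi)) *
            Real.exp (-(y - b) ^ 2 / (2 * (u - d))) -
          (1 / 2) * ((y - b) * Real.sqrt D / Real.sqrt (u - d + D)) *
            Real.exp (-(y - b) ^ 2 / (2 * (u - d + D))) *
            Erfc ((y - b) * Real.sqrt D / Real.sqrt (2 * (u - d) * (u - d + D)))) :=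
  h_b3_identity_general y b D d u hD hu
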